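/- Let T > 0, C > 0, and let (N_k)_{k ≥ 0} be continuous nonnegative functions on [0, T] with M := sup_{t ∈ [0,T]} N₀(t) < ∞ and N_k(t) ≤ 2C ∫₀^t (t − s)^{−1/2} N_{k−1}(s) ds for every k ≥ 1 and t ∈ [0, T]. Then for every k ≥ 0 and t ∈ [0, T]: N_k(t) ≤ M (2C Γ(1/2))^k t^{k/2} / Γ((k+2)/2). In particular, Σ_{k=0}^∞ N_k(t) converges uniformly on [0, T]. -/

import Mathlib

open MeasureTheory Real Set intervalIntegral
open scoped Nat

/-! The Beta integral `∫₀ᵗ (t - s)^p s^q ds = Γ(p+1) Γ(q+1) / Γ(p+q+2) · t^(p+q+1)` shows that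
`f ↦ A ∫₀ᵗ (t - s)^p f(s) ds` maps a bound `c t^q` to a bound of the same shape, and iterating it from
`N₀ ≤ M` the Gamma factors telescope to `N_k(t) ≤ M (A Γ(p+1))^k t^(k(p+1)) / Γ(k(p+1)+1)`.
For `p = -1/2` these majorants are `M x^k / Γ(k/2+1)` with `x = A Γ(1/2) √T`; their even and odd
terms are dominated by exponential series, so the Weierstrass M-test gives uniform convergence. -/

theorem integral_sub_rpow_mul_rpow {p q t : ℝ} (hp : -1 < p) (hq : -1 < q) (ht : 0 < t) :
    ∫ s in (0:ℝ)..t, (t - s) ^ p * s ^ q =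
      Gamma (p + 1) * Gamma (q + 1) / Gamma (p + q + 2) * t ^ (p + q + 1) := by
  have hbeta := Complex.betaIntegral_scaled (q + 1) (p + 1) ht
  rw [Complex.betaIntegral_eq_Gamma_mul_div _ _ (by simp; linarith) (by simp; linarith)] at hbeta
  apply Complex.ofReal_injective
  rw [← integral_ofReal, integral_congr (g := fun s : ℝ =>
    (s : ℂ) ^ ((q : ℂ) + 1 - 1) * ((t : ℂ) - s) ^ ((p : ℂ) + 1 - 1)), hbeta]
  · rw [Complex.ofReal_mul, Complex.ofReal_cpow ht.le, Complex.ofReal_div, Complex.ofReal_mul,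
      ← Complex.Gamma_ofReal, ← Complex.Gamma_ofReal, ← Complex.Gamma_ofReal]
    push_cast
    ring_nf
  · intro s hs
    rw [uIcc_of_le ht.le] at hs
    simp only [add_sub_cancel_right]
    rw [Complex.ofReal_mul, Complex.ofReal_cpow (by linarith [hs.2]), Complex.ofReal_cpow hs.1,
      Complex.ofReal_sub]
    ring

theorem intervalIntegrable_sub_rpow_mul_rpow {p q t : ℝ} (hp : -1 < p) (hq : -1 < q)
    (ht : 0 < t) : IntervalIntegrable (fun s => (t - s) ^ p * s ^ q) volume 0 t :=
  intervalIntegrable_of_integral_ne_zero <| by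
    rw [integral_sub_rpow_mul_rpow hp hq ht]
    have := Gamma_pos_of_pos (show 0 < p + 1 by linarith)
    have := Gamma_pos_of_pos (show 0 < q + 1 by linarith)
    have := Gamma_pos_of_pos (show 0 < p + q + 2 by linarith)
    positivity

theorem integral_sub_rpow_mul_le_of_le_mul_rpow {f : ℝ → ℝ} {p q t c : ℝ} (hp : -1 < p)
    (hq : -1 < q) (hpq : p + q + 1 ≠ 0) (ht : 0 ≤ t) (hf : ContinuousOn f (Icc 0 t))
    (hfle : ∀ s ∈ Icc 0 t, f s ≤ c * s ^ q) :
    ∫ s in (0:ℝ)..t, (t - s) ^ p * f s ≤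
      c * (Gamma (p + 1) * Gamma (q + 1) / Gamma (p + q + 2) * t ^ (p + q + 1)) := by
  rcases ht.eq_or_lt with rfl | ht
  · simp [zero_rpow hpq]
  have hker : IntervalIntegrable (fun s => (t - s) ^ p) volume 0 t := by
    simpa using intervalIntegrable_sub_rpow_mul_rpow hp neg_one_lt_zero ht
  rw [← integral_sub_rpow_mul_rpow hp hq ht, ← intervalIntegral.integral_const_mul]
  refine integral_mono_on ht.le (hker.mul_continuousOn (by rwa [uIcc_of_le ht.le]))
    ((intervalIntegrable_sub_rpow_mul_rpow hp hq ht).const_mul c) fun s hs => ?_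
  calc (t - s) ^ p * f s ≤ (t - s) ^ p * (c * s ^ q) :=
        mul_le_mul_of_nonneg_left (hfle s hs) (rpow_nonneg (sub_nonneg.2 hs.2) _)
    _ = c * ((t - s) ^ p * s ^ q) := by ring

theorem summable_pow_div_Gamma_half_add_one (x : ℝ) :
    Summable fun k : ℕ => x ^ k / Gamma (k / 2 + 1) := by
  apply Summable.even_add_odd
  · convert Real.summable_pow_div_factorial (x ^ 2) using 2 with j
    push_cast
    rw [pow_mul, ← Gamma_nat_eq_factorial]
    ring_nf
  · refine .of_norm_bounded_eventually_nat
      ((Real.summable_pow_div_factorial (x ^ 2)).mul_left |x|) ?_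
    filter_upwards [Filter.eventually_ge_atTop 1] with j hj
    have hfac : (j ! : ℝ) ≤ Gamma (((2 * j + 1 : ℕ) : ℝ) / 2 + 1) := by
      have hj' : (1 : ℝ) ≤ j := by exact_mod_cast hj
      rw [← Gamma_nat_eq_factorial]
      push_cast
      exact Gamma_strictMonoOn_Ici.monotoneOn (by simp; linarith) (by simp; linarith)
        (by linarith)
    rw [norm_div, norm_pow, Real.norm_of_nonneg (Gamma_pos_of_pos (by positivity)).le, pow_succ,
      pow_mul, Real.norm_eq_abs, sq_abs, mul_comm, mul_div_assoc]
    gcongr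

theorem le_of_le_integral_sub_rpow_mul {N : ℕ → ℝ → ℝ} {T A M p : ℝ} (hp : -1 < p)
    (hA : 0 ≤ A) (hN_cont : ∀ k, ContinuousOn (N k) (Icc 0 T)) (hM : ∀ t ∈ Icc 0 T, N 0 t ≤ M)
    (hrec : ∀ k, ∀ t ∈ Icc 0 T, N (k + 1) t ≤ A * ∫ s in (0:ℝ)..t, (t - s) ^ p * N k s)
    (k : ℕ) : ∀ t ∈ Icc 0 T,
      N k t ≤ M * (A * Gamma (p + 1)) ^ k / Gamma (k * (p + 1) + 1) * t ^ (k * (p + 1)) := by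
  induction k with
  | zero => simpa using hM
  | succ k ih =>
    intro t ht
    have hk : (0 : ℝ) ≤ k * (p + 1) := mul_nonneg k.cast_nonneg (by linarith)
    have hstep := integral_sub_rpow_mul_le_of_le_mul_rpow hp (by linarith)
      (by linarith : 0 < p + k * (p + 1) + 1).ne' ht.1
      ((hN_cont k).mono (Icc_subset_Icc_right ht.2)) fun s hs => ih s ⟨hs.1, hs.2.trans ht.2⟩
    have hΓ : Gamma (k * (p + 1) + 1) ≠ 0 := (Gamma_pos_of_pos (by linarith)).ne'
    calc N (k + 1) t ≤ A * ∫ s in (0:ℝ)..t, (t - s) ^ p * N k s := hrec k t ht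
      _ ≤ A * _ := mul_le_mul_of_nonneg_left hstep hA
      _ = _ := by
        rw [show p + k * (p + 1) + 2 = ((k + 1 : ℕ) : ℝ) * (p + 1) + 1 by push_cast; ring,
          show p + k * (p + 1) + 1 = ((k + 1 : ℕ) : ℝ) * (p + 1) by push_cast; ring]
        generalize Gamma (k * (p + 1) + 1) = G at hΓ ⊢
        field_simp
        ring

/-- iterated singular Gronwall bounds with Gamma function: if
`N_k(t) ≤ 2C ∫₀ᵗ (t−s)^{−1/2} N_{k−1}(s) ds` for `k ≥ 1` and `N₀ ≤ M` on `[0,T]`, then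
`N_k(t) ≤ M (2C Γ(1/2))^k t^{k/2} / Γ((k+2)/2)`, and the series `Σ_k N_k` converges
uniformly on `[0,T]`. -/
theorem iterated_singular_gronwall (T C M : ℝ) (hT : 0 < T) (hC : 0 < C)
    (N : ℕ → ℝ → ℝ)
    (hN_cont : ∀ k, ContinuousOn (N k) (Set.Icc 0 T))
    (hN_nonneg : ∀ k, ∀ t ∈ Set.Icc (0 : ℝ) T, 0 ≤ N k t)
    (hM : ∀ t ∈ Set.Icc (0 : ℝ) T, N 0 t ≤ M)
    (hrec : ∀ k : ℕ, 1 ≤ k → ∀ t ∈ Set.Icc (0 : ℝ) T,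
      N k t ≤ 2 * C * ∫ s in (0:ℝ)..t, (t - s) ^ (-(1:ℝ)/2) * N (k - 1) s) :
    (∀ k : ℕ, ∀ t ∈ Set.Icc (0 : ℝ) T,
      N k t ≤ M * (2 * C * Real.Gamma (1/2)) ^ k * t ^ ((k : ℝ)/2) /
        Real.Gamma (((k : ℝ) + 2)/2)) ∧
    TendstoUniformlyOn (fun n t => ∑ k ∈ Finset.range n, N k t)
      (fun t => ∑' k, N k t) Filter.atTop (Set.Icc 0 T) := by
  set B := 2 * C * Gamma (1 / 2) with hB
  have bound : ∀ k : ℕ, ∀ t ∈ Icc 0 T,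
      N k t ≤ M * B ^ k * t ^ ((k : ℝ) / 2) / Gamma (((k : ℝ) + 2) / 2) := fun k t ht =>
    (le_of_le_integral_sub_rpow_mul (p := -1 / 2) (A := 2 * C) (by norm_num) (by positivity)
      hN_cont hM (fun k t ht => by simpa using hrec (k + 1) (by omega) t ht) k t ht).trans_eq
      (by rw [hB]; norm_num; ring_nf)
  refine ⟨bound, tendstoUniformlyOn_tsum_nat
    ((summable_pow_div_Gamma_half_add_one (B * √T)).mul_left M) fun k t ht => ?_⟩
  rw [norm_of_nonneg (hN_nonneg k t ht)]
  refine (bound k t ht).trans ?_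
  have hM0 : 0 ≤ M := (hN_nonneg 0 0 ⟨le_rfl, hT.le⟩).trans (hM 0 ⟨le_rfl, hT.le⟩)
  have hB0 : 0 ≤ B := by positivity
  rw [rpow_div_two_eq_sqrt _ ht.1, rpow_natCast, add_div, div_self two_ne_zero, mul_pow B,
    mul_div_assoc, mul_assoc, ← mul_div_assoc]
  gcongr
  exact ht.2
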